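/- arXiv:math/0206246 — 2 statements merged into one kernel-verified Lean document; each statement's English description precedes it below -/
import Mathlib

section
/- Each sylvester class of permutations is an interval of the (right) weak order on the symmetric group: for any unlabelled binary tree T with n nodes, the set {σ ∈ S_n : P(σ) = T} is an interval in the weak order. -/
namespace Sylv

variable {α : Type*}

/-- Insert a letter into a binary search tree: left on `≤`, right on `>`. -/
def insert [LinearOrder α] (x : α) : BinaryTree α → BinaryTree α
  | BinaryTree.nil => BinaryTree.node x BinaryTree.nil BinaryTree.nil
  | BinaryTree.node a l r =>
      if x ≤ a then BinaryTree.node a (Sylv.insert x l) r else BinaryTree.node a l (Sylv.insert x r)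

/-- The binary search tree `P(w)`, inserting the letters of `w` from right to left. -/
def P [LinearOrder α] (w : List α) : BinaryTree α := w.foldr Sylv.insert BinaryTree.nil

/-- Infix (in-order) reading of a labelled binary tree. -/
def inorder : BinaryTree α → List α
  | BinaryTree.nil => []
  | BinaryTree.node a l r => inorder l ++ a :: inorder r

/-- Postfix (post-order) reading of a labelled binary tree. -/
def postorder : BinaryTree α → List α
  | BinaryTree.nil => []
  | BinaryTree.node a l r => postorder l ++ postorder r ++ [a]

/-- Binary search tree property: left labels `≤` root, right labels `>` root. -/
def IsBST [LinearOrder α] : BinaryTree α → Prop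
  | BinaryTree.nil => True
  | BinaryTree.node a l r =>
      (∀ x ∈ inorder l, x ≤ a) ∧ (∀ x ∈ inorder r, a < x) ∧ IsBST l ∧ IsBST r

/-- Shape (underlying unlabelled tree). -/
def shape : BinaryTree α → BinaryTree Unit
  | BinaryTree.nil => BinaryTree.nil
  | BinaryTree.node _ l r => BinaryTree.node () (shape l) (shape r)

/-- The sylvester congruence: the monoid congruence generated by
`z x u y ≡ x z u y` for letters `x ≤ y < z` and a word `u`. -/
inductive SylvCong [LinearOrder α] : List α → List α → Prop
  | rel (p u q : List α) (x y z : α) (hxy : x ≤ y) (hyz : y < z) :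
      SylvCong (p ++ z :: x :: u ++ y :: q) (p ++ x :: z :: u ++ y :: q)
  | refl (w : List α) : SylvCong w w
  | symm {u v} : SylvCong u v → SylvCong v u
  | trans {u v w} : SylvCong u v → SylvCong v w → SylvCong u w

/-- One rewriting step `x z u y → z x u y` (with `x ≤ y < z`), in any context. -/
inductive SylvStep [LinearOrder α] : List α → List α → Prop
  | step (p u q : List α) (x y z : α) (hxy : x ≤ y) (hyz : y < z) :
      SylvStep (p ++ x :: z :: u ++ y :: q) (p ++ z :: x :: u ++ y :: q)

/-- Standardization of a word: values in `1..n`. -/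
def std [LinearOrder α] [Inhabited α] (w : List α) : List ℕ :=
  (List.range w.length).map (fun i =>
    ((List.range w.length).filter (fun j =>
      w.getD j default < w.getD i default ∨
        (w.getD j default = w.getD i default ∧ j < i))).length + 1)

/-- Inverse of a permutation word of `1..n`. -/
def invPerm (s : List ℕ) : List ℕ :=
  (List.range s.length).map (fun j => s.idxOf (j + 1) + 1)

/-- `w` is a permutation word of `{1,…,n}`. -/
def IsPermWord (n : ℕ) (w : List ℕ) : Prop := w.Perm (List.range' 1 n)

/-- Decreasing tree: every node's label exceeds all labels in its subtrees. -/
def IsDecreasing : BinaryTree ℕ → Prop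
  | BinaryTree.nil => True
  | BinaryTree.node a l r =>
      (∀ x ∈ inorder l, x < a) ∧ (∀ x ∈ inorder r, x < a) ∧ IsDecreasing l ∧ IsDecreasing r

/-- `t` is the decreasing tree of the word `w` (unique when letters are distinct). -/
def IsDecrTreeOf (w : List ℕ) (t : BinaryTree ℕ) : Prop := IsDecreasing t ∧ inorder t = w

/-- Label the nodes of an unlabelled tree in infix order, starting from `k`. -/
def labelFrom : BinaryTree Unit → ℕ → BinaryTree ℕ × ℕ
  | BinaryTree.nil, k => (BinaryTree.nil, k)
  | BinaryTree.node _ l r, k =>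
      let p := labelFrom l k
      let q := labelFrom r (p.2 + 1)
      (BinaryTree.node p.2 p.1 q.1, q.2)

/-- The canonical tree-word `w_T`: postfix reading of `T` labelled in infix order by `1..n`. -/
def treeWord (T : BinaryTree Unit) : List ℕ := postorder (labelFrom T 1).1

/-- Shift all letters of a word by `k`. -/
def shift (k : ℕ) (w : List ℕ) : List ℕ := w.map (· + k)

/-- `IsShuffle u v w` : `w` appears in the shuffle product `u ⧢ v`. -/
inductive IsShuffle : List ℕ → List ℕ → List ℕ → Prop
  | nil : IsShuffle [] [] []
  | left (a : ℕ) {u v w} : IsShuffle u v w → IsShuffle (a :: u) v (a :: w)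
  | right (a : ℕ) {u v w} : IsShuffle u v w → IsShuffle u (a :: v) (a :: w)

/-- A model of the homogeneous components of `FQSym`: formal series on words,
encoded by their coefficient functions. -/
abbrev FQS := List ℕ → ℚ

/-- Product of noncommutative series: convolution over factorizations. -/
noncomputable def mulF (f g : FQS) : FQS := fun w =>
  ∑ i ∈ Finset.range (w.length + 1), f (w.take i) * g (w.drop i)

open Classical in
/-- `F_σ = ∑_{std w = σ⁻¹} w`. -/
noncomputable def Fel (σ : List ℕ) : FQS := fun w =>
  if std w = invPerm σ then 1 else 0

open Classical in
/-- `P_T = ∑_{P(σ) = T} F_σ`. -/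
noncomputable def Pel (T : BinaryTree Unit) : FQS := fun w =>
  if ∃ σ, IsPermWord w.length σ ∧ shape (P σ) = T ∧ std w = invPerm σ then 1 else 0

/-- Inversions (by values) of a permutation word. -/
def InvV (w : List ℕ) : Set (ℕ × ℕ) :=
  {p | p.1 < p.2 ∧ p.1 ∈ w ∧ p.2 ∈ w ∧ w.idxOf p.2 < w.idxOf p.1}

/-- Right weak order on permutation words: inclusion of inversion sets. -/
def weakLe (u v : List ℕ) : Prop := InvV u ⊆ InvV v

/-- Product of hook lengths of a binary tree. -/
def hookProd : BinaryTree Unit → ℕ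
  | BinaryTree.nil => 1
  | BinaryTree.node _ l r => (l.numNodes + r.numNodes + 1) * hookProd l * hookProd r

/-- Major index of a word: sum of descent positions (1-based). -/
def maj (w : List ℕ) : ℕ :=
  ∑ i ∈ Finset.range (w.length - 1),
    if w.getD (i + 1) 0 < w.getD i 0 then i + 1 else 0

/-- `[n]_q` as a polynomial. -/
noncomputable def qInt (n : ℕ) : Polynomial ℚ := ∑ i ∈ Finset.range n, Polynomial.X ^ i

/-- `[n]_q!`. -/
noncomputable def qFact : ℕ → Polynomial ℚ
  | 0 => 1
  | n + 1 => qFact n * qInt (n + 1)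

/-- `∏_{v ∈ T} q^{δ_v} [h_v]_q`. -/
noncomputable def qHook : BinaryTree Unit → Polynomial ℚ
  | BinaryTree.nil => 1
  | BinaryTree.node _ l r =>
      Polynomial.X ^ r.numNodes * qInt (l.numNodes + r.numNodes + 1) * qHook l * qHook r

end Sylv

namespace SylvProof
open Sylv List

lemma inorder_insert_perm (x : ℕ) (t : BinaryTree ℕ) :
    (inorder (Sylv.insert x t)).Perm (x :: inorder t) := by
  induction t with
  | nil => simp [Sylv.insert, inorder]
  | node a l r ihl ihr =>
    by_cases h : x ≤ a
    · simpa [Sylv.insert, if_pos h, inorder] using ihl.append_right (a :: inorder r)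
    · simp only [Sylv.insert, if_neg h, inorder]
      refine Perm.trans (Perm.append_left _ (Perm.cons a ihr)) ?_
      refine Perm.trans (Perm.append_left _ (Perm.swap x a _)) ?_
      exact List.perm_middle

lemma mem_inorder_insert {x y : ℕ} {t : BinaryTree ℕ} :
    y ∈ inorder (Sylv.insert x t) ↔ y = x ∨ y ∈ inorder t := by
  rw [(inorder_insert_perm x t).mem_iff]; simp

lemma isBST_insert (x : ℕ) {t : BinaryTree ℕ} (h : IsBST t) : IsBST (Sylv.insert x t) := by
  induction t with
  | nil => simp [Sylv.insert, IsBST, inorder]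
  | node a l r ihl ihr =>
    obtain ⟨h1, h2, h3, h4⟩ := h
    by_cases hx : x ≤ a
    · simp only [Sylv.insert, if_pos hx, IsBST]
      refine ⟨?_, h2, ihl h3, h4⟩
      intro y hy
      rcases mem_inorder_insert.mp hy with rfl | hy
      · exact hx
      · exact h1 y hy
    · simp only [Sylv.insert, if_neg hx, IsBST]
      refine ⟨h1, ?_, h3, ihr h4⟩
      intro y hy
      rcases mem_inorder_insert.mp hy with rfl | hy
      · exact lt_of_not_ge hx
      · exact h2 y hy

lemma inorder_P_perm (w : List ℕ) : (inorder (P w)).Perm w := by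
  induction w with
  | nil => simp [P, inorder]
  | cons a w ih =>
    have : P (a :: w) = Sylv.insert a (P w) := rfl
    rw [this]
    exact (inorder_insert_perm a (P w)).trans (ih.cons a)

lemma isBST_P (w : List ℕ) : IsBST (P w) := by
  induction w with
  | nil => simp [P, IsBST]
  | cons a w ih => exact isBST_insert a ih

lemma sorted_inorder {t : BinaryTree ℕ} (h : IsBST t) : (inorder t).Pairwise (· ≤ ·) := by
  induction t with
  | nil => simp [inorder]
  | node a l r ihl ihr =>
    obtain ⟨h1, h2, h3, h4⟩ := h
    simp only [inorder, List.pairwise_append, List.pairwise_cons]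
    refine ⟨ihl h3, ⟨fun y hy => le_of_lt (h2 y hy), ihr h4⟩, ?_⟩
    intro x hx b hb
    rcases List.mem_cons.mp hb with rfl | hb
    · exact h1 x hx
    · exact le_trans (h1 x hx) (le_of_lt (h2 b hb))

lemma length_inorder (t : BinaryTree ℕ) : (inorder t).length = t.numNodes := by
  induction t with
  | nil => simp [inorder]
  | node a l r ihl ihr => simp [inorder, BinaryTree.numNodes, ihl, ihr]; omega

lemma numNodes_shape (t : BinaryTree ℕ) : (shape t).numNodes = t.numNodes := by
  induction t with
  | nil => rfl
  | node a l r ihl ihr => simp [shape, BinaryTree.numNodes, ihl, ihr]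

lemma eq_of_shape_of_inorder : ∀ {t₁ t₂ : BinaryTree ℕ},
    shape t₁ = shape t₂ → inorder t₁ = inorder t₂ → t₁ = t₂
  | BinaryTree.nil, BinaryTree.nil, _, _ => rfl
  | BinaryTree.nil, BinaryTree.node _ _ _, hs, _ => by simp [shape] at hs
  | BinaryTree.node _ _ _, BinaryTree.nil, hs, _ => by simp [shape] at hs
  | BinaryTree.node a₁ l₁ r₁, BinaryTree.node a₂ l₂ r₂, hs, hi => by
    simp only [shape, BinaryTree.node.injEq] at hs
    obtain ⟨-, hsl, hsr⟩ := hs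
    simp only [inorder] at hi
    have hlen : (inorder l₁).length = (inorder l₂).length := by
      rw [length_inorder, length_inorder, ← numNodes_shape l₁, ← numNodes_shape l₂, hsl]
    obtain ⟨hl, hr⟩ := List.append_inj hi hlen
    simp only [List.cons.injEq] at hr
    rw [eq_of_shape_of_inorder hsl hl, eq_of_shape_of_inorder hsr hr.2, hr.1]

lemma foldr_insert_node (a : ℕ) (l r : BinaryTree ℕ) (w : List ℕ) :
    w.foldr Sylv.insert (BinaryTree.node a l r) =
      BinaryTree.node a ((w.filter (· ≤ a)).foldr Sylv.insert l)
        ((w.filter (fun x => a < x)).foldr Sylv.insert r) := by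
  induction w with
  | nil => simp
  | cons c w ih =>
    by_cases h : c ≤ a
    · have h2 : ¬ a < c := not_lt.mpr h
      simp [List.filter_cons, h, h2, List.foldr_cons, ih, Sylv.insert]
    · have h2 : a < c := lt_of_not_ge h
      simp [List.filter_cons, h, h2, List.foldr_cons, ih, Sylv.insert]

lemma P_concat (w : List ℕ) (a : ℕ) :
    P (w ++ [a]) = BinaryTree.node a (P (w.filter (· ≤ a))) (P (w.filter (fun x => a < x))) := by
  have : P (w ++ [a]) = w.foldr Sylv.insert (BinaryTree.node a BinaryTree.nil BinaryTree.nil) := by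
    simp [P, List.foldr_append]; rfl
  rw [this, foldr_insert_node]; rfl

/-- linear extension condition: every label in a subtree occurs in `w` before the root. -/
def Ext (w : List ℕ) : BinaryTree ℕ → Prop
  | BinaryTree.nil => True
  | BinaryTree.node a l r =>
      (∀ x ∈ inorder l, w.idxOf x < w.idxOf a) ∧
      (∀ x ∈ inorder r, w.idxOf x < w.idxOf a) ∧ Ext w l ∧ Ext w r

/-- `b` lies in a proper subtree of the node labelled `a`. -/
def Desc : BinaryTree ℕ → ℕ → ℕ → Prop
  | BinaryTree.nil, _, _ => False
  | BinaryTree.node c l r, a, b =>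
      (a = c ∧ (b ∈ inorder l ∨ b ∈ inorder r)) ∨ Desc l a b ∨ Desc r a b

lemma sublist_indexOf {s w : List ℕ} (hs : s.Sublist w) :
    w.Nodup → ∀ x y, x ∈ s → y ∈ s → w.idxOf x < w.idxOf y → s.idxOf x < s.idxOf y := by
  induction hs with
  | slnil => intro _ x y hx; simp at hx
  | @cons s' w' c hsub ih =>
    intro hw x y hx hy h
    have hc : c ∉ w' := (List.nodup_cons.mp hw).1
    have hxc : x ≠ c := fun h' => hc (h' ▸ hsub.subset hx)
    have hyc : y ≠ c := fun h' => hc (h' ▸ hsub.subset hy)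
    rw [List.idxOf_cons_ne _ (Ne.symm hxc), List.idxOf_cons_ne _ (Ne.symm hyc)] at h
    exact ih (List.nodup_cons.mp hw).2 x y hx hy (by omega)
  | @cons_cons s' w' c hsub ih =>
    intro hw x y hx hy h
    have hc : c ∉ w' := (List.nodup_cons.mp hw).1
    by_cases hxc : x = c
    · subst hxc
      have hyx : y ≠ x := by
        intro h'; subst h'; omega
      rw [List.idxOf_cons_self]
      rw [List.idxOf_cons_ne _ (Ne.symm hyx)]
      omega
    · have hyc : y ≠ c := by
        intro h'; subst h'
        rw [List.idxOf_cons_self] at h; omega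
      have hxs : x ∈ s' := by
        rcases List.mem_cons.mp hx with h' | h'
        · exact absurd h' hxc
        · exact h'
      have hys : y ∈ s' := by
        rcases List.mem_cons.mp hy with h' | h'
        · exact absurd h' hyc
        · exact h'
      rw [List.idxOf_cons_ne _ (Ne.symm hxc), List.idxOf_cons_ne _ (Ne.symm hyc)] at h ⊢
      have := ih (List.nodup_cons.mp hw).2 x y hxs hys (by omega)
      omega

lemma ext_sublist {s w : List ℕ} (hs : s.Sublist w) (hw : w.Nodup) :
    ∀ {t : BinaryTree ℕ}, (∀ x ∈ inorder t, x ∈ s) → Ext w t → Ext s t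
  | BinaryTree.nil, _, _ => trivial
  | BinaryTree.node a l r, hmem, hext => by
    obtain ⟨h1, h2, h3, h4⟩ := hext
    have ha : a ∈ s := hmem a (by simp [inorder])
    refine ⟨?_, ?_, ?_, ?_⟩
    · intro x hx
      exact sublist_indexOf hs hw _ _ (hmem x (by simp [inorder, hx])) ha (h1 x hx)
    · intro x hx
      exact sublist_indexOf hs hw _ _ (hmem x (by simp [inorder, hx])) ha (h2 x hx)
    · exact ext_sublist hs hw (fun x hx => hmem x (by simp [inorder, hx])) h3
    · exact ext_sublist hs hw (fun x hx => hmem x (by simp [inorder, hx])) h4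

lemma ext_shift {w : List ℕ} {a : ℕ} (ha : a ∉ w) :
    ∀ {t : BinaryTree ℕ}, (∀ x ∈ inorder t, x ∈ w) → Ext w t → Ext (a :: w) t
  | BinaryTree.nil, _, _ => trivial
  | BinaryTree.node c l r, hmem, ⟨h1, h2, h3, h4⟩ => by
    have hidx : ∀ x ∈ w, (a :: w).idxOf x = w.idxOf x + 1 := by
      intro x hx
      have : x ≠ a := fun h => ha (h ▸ hx)
      rw [List.idxOf_cons_ne _ (Ne.symm this)]
    have hc : c ∈ w := hmem c (by simp [inorder])
    refine ⟨?_, ?_, ?_, ?_⟩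
    · intro x hx
      have hxw : x ∈ w := hmem x (by simp [inorder, hx])
      rw [hidx x hxw, hidx c hc]
      have := h1 x hx; omega
    · intro x hx
      have hxw : x ∈ w := hmem x (by simp [inorder, hx])
      rw [hidx x hxw, hidx c hc]
      have := h2 x hx; omega
    · exact ext_shift ha (fun x hx => hmem x (by simp [inorder, hx])) h3
    · exact ext_shift ha (fun x hx => hmem x (by simp [inorder, hx])) h4

lemma ext_insert {w : List ℕ} {a : ℕ} (ha : a ∉ w) :
    ∀ {t : BinaryTree ℕ}, (∀ x ∈ inorder t, x ∈ w) → Ext w t → Ext (a :: w) (Sylv.insert a t)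
  | BinaryTree.nil, _, _ => by
    refine ⟨?_, ?_, trivial, trivial⟩ <;> simp [inorder]
  | BinaryTree.node c l r, hmem, ⟨h1, h2, h3, h4⟩ => by
    have hc : c ∈ w := hmem c (by simp [inorder])
    have hca : c ≠ a := fun h => ha (h ▸ hc)
    have hidx : ∀ x ∈ w, (a :: w).idxOf x = w.idxOf x + 1 := by
      intro x hx
      have : x ≠ a := fun h => ha (h ▸ hx)
      rw [List.idxOf_cons_ne _ (Ne.symm this)]
    have hroot : ∀ x ∈ w, (a :: w).idxOf x < (a :: w).idxOf c ↔ w.idxOf x < w.idxOf c := by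
      intro x hx; rw [hidx x hx, hidx c hc]; omega
    have hia : (a : ℕ) :: w = a :: w := rfl
    have ha0 : (a :: w).idxOf a = 0 := List.idxOf_cons_self
    have hmeml : ∀ x ∈ inorder l, x ∈ w := fun x hx => hmem x (by simp [inorder, hx])
    have hmemr : ∀ x ∈ inorder r, x ∈ w := fun x hx => hmem x (by simp [inorder, hx])
    by_cases hle : a ≤ c
    · simp only [Sylv.insert, if_pos hle]
      refine ⟨?_, ?_, ext_insert ha hmeml h3, ext_shift ha hmemr h4⟩
      · intro x hx
        rcases mem_inorder_insert.mp hx with rfl | hx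
        · rw [ha0, hidx c hc]; omega
        · exact (hroot x (hmeml x hx)).mpr (h1 x hx)
      · intro x hx
        exact (hroot x (hmemr x hx)).mpr (h2 x hx)
    · simp only [Sylv.insert, if_neg hle]
      refine ⟨?_, ?_, ext_shift ha hmeml h3, ext_insert ha hmemr h4⟩
      · intro x hx
        exact (hroot x (hmeml x hx)).mpr (h1 x hx)
      · intro x hx
        rcases mem_inorder_insert.mp hx with rfl | hx
        · rw [ha0, hidx c hc]; omega
        · exact (hroot x (hmemr x hx)).mpr (h2 x hx)

lemma ext_P {w : List ℕ} (hw : w.Nodup) : Ext w (P w) := by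
  induction w with
  | nil => trivial
  | cons a w ih =>
    have h := List.nodup_cons.mp hw
    exact ext_insert h.1 (fun x hx => (inorder_P_perm w).subset hx) (ih h.2)

lemma P_eq_of_ext : ∀ {t : BinaryTree ℕ} {w : List ℕ},
    w.Nodup → IsBST t → (inorder t).Perm w → Ext w t → P w = t
  | BinaryTree.nil, w, _, _, hperm, _ => by
    have : w = [] := by simpa [inorder] using hperm.symm
    simp [this, P]
  | BinaryTree.node b l r, w, hw, hbst, hperm, hext => by
    obtain ⟨h1, h2, h3, h4⟩ := hbst
    obtain ⟨e1, e2, e3, e4⟩ := hext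
    rcases List.eq_nil_or_concat w with rfl | ⟨w', a, rfl⟩
    · exfalso
      have : inorder (BinaryTree.node b l r) = [] := hperm.eq_nil
      simp [inorder] at this
    rw [List.concat_eq_append] at *
    have haw' : a ∉ w' := by
      have := hw
      rw [List.nodup_append] at this
      intro hmem
      exact this.2.2 _ hmem _ (by simp) rfl
    have hidxa : (w' ++ [a]).idxOf a = w'.length := by
      rw [List.idxOf_append_of_notMem haw', List.idxOf_cons_self]
      omega
    have hidxmax : ∀ x ∈ w' ++ [a], (w' ++ [a]).idxOf x ≤ w'.length := by
      intro x hx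
      have := List.idxOf_lt_length_iff.mpr hx
      simp at this; omega
    have hb : b ∈ w' ++ [a] := hperm.subset (by simp [inorder])
    have hba : b = a := by
      have ham : a ∈ inorder (BinaryTree.node b l r) := hperm.symm.subset (by simp)
      simp only [inorder, List.mem_append, List.mem_cons] at ham
      rcases ham with h' | h' | h'
      · have := e1 a h'
        have := hidxmax b hb
        omega
      · exact h'.symm
      · have := e2 a h'
        have := hidxmax b hb
        omega
    subst hba
    have hperm' : (inorder l ++ b :: inorder r).Perm (w' ++ [b]) := hperm
    -- left filter
    have hpl : (inorder l).Perm (w'.filter (· ≤ b)) := by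
      have := hperm'.filter (· ≤ b)
      rw [List.filter_append, List.filter_append, List.filter_cons] at this
      have hfl : (inorder l).filter (· ≤ b) = inorder l :=
        List.filter_eq_self.mpr (fun x hx => by simpa using h1 x hx)
      have hfr : (inorder r).filter (· ≤ b) = [] :=
        List.filter_eq_nil_iff.mpr (fun x hx => by simpa using not_le.mpr (h2 x hx))
      have hfa : ([b] : List ℕ).filter (· ≤ b) = [b] := by simp
      simp only [hfl, hfr, hfa] at this
      exact (List.perm_append_right_iff [b]).mp (by simpa using this)
    have hpr : (inorder r).Perm (w'.filter (fun x => b < x)) := by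
      have := hperm'.filter (fun x => b < x)
      rw [List.filter_append, List.filter_append, List.filter_cons] at this
      have hfl : (inorder l).filter (fun x => b < x) = [] :=
        List.filter_eq_nil_iff.mpr (fun x hx => by simpa using not_lt.mpr (h1 x hx))
      have hfr : (inorder r).filter (fun x => b < x) = inorder r :=
        List.filter_eq_self.mpr (fun x hx => by simpa using h2 x hx)
      have hfa : ([b] : List ℕ).filter (fun x => b < x) = [] := by simp
      simp only [hfl, hfr, hfa] at this
      simpa using this
    have hsubl : (w'.filter (· ≤ b)).Sublist (w' ++ [b]) :=
      (List.filter_sublist (l := w')).trans (List.sublist_append_left w' [b])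
    have hsubr : (w'.filter (fun x => b < x)).Sublist (w' ++ [b]) :=
      (List.filter_sublist (l := w')).trans (List.sublist_append_left w' [b])
    have hextl : Ext (w'.filter (· ≤ b)) l :=
      ext_sublist hsubl hw (fun x hx => hpl.subset hx) e3
    have hextr : Ext (w'.filter (fun x => b < x)) r :=
      ext_sublist hsubr hw (fun x hx => hpr.subset hx) e4
    have hnl : (w'.filter (· ≤ b)).Nodup := hsubl.nodup hw
    have hnr : (w'.filter (fun x => b < x)).Nodup := hsubr.nodup hw
    rw [P_concat]
    rw [P_eq_of_ext hnl h3 hpl hextl, P_eq_of_ext hnr h4 hpr hextr]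

/-- mirror post-order reading -/
def rpost : BinaryTree ℕ → List ℕ
  | BinaryTree.nil => []
  | BinaryTree.node a l r => rpost r ++ rpost l ++ [a]

lemma postorder_perm_inorder (t : BinaryTree ℕ) : (postorder t).Perm (inorder t) := by
  induction t with
  | nil => rfl
  | node a l r ihl ihr =>
    simp only [postorder, inorder]
    rw [List.append_assoc]
    refine (ihl.append (ihr.append_right [a])).trans (Perm.append_left _ ?_)
    simpa using (List.perm_middle (a := a) (l₁ := inorder r) (l₂ := ([] : List ℕ))).symm

lemma rpost_perm_inorder (t : BinaryTree ℕ) : (rpost t).Perm (inorder t) := by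
  induction t with
  | nil => rfl
  | node a l r ihl ihr =>
    simp only [rpost, inorder]
    rw [List.append_assoc]
    refine (ihr.append (ihl.append_right [a])).trans ?_
    calc inorder r ++ (inorder l ++ [a])
        ~ (inorder l ++ [a]) ++ inorder r := List.perm_append_comm
      _ = inorder l ++ ([a] ++ inorder r) := by rw [List.append_assoc]
      _ = inorder l ++ a :: inorder r := by simp

lemma desc_mem : ∀ {t : BinaryTree ℕ} {a b : ℕ}, Desc t a b → a ∈ inorder t ∧ b ∈ inorder t
  | BinaryTree.node c l r, a, b, h => by
    rcases h with ⟨rfl, h | h⟩ | h | h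
    · simp [inorder, h]
    · simp [inorder, h]
    · have := desc_mem h; simp [inorder, this.1, this.2]
    · have := desc_mem h; simp [inorder, this.1, this.2]

lemma desc_ne : ∀ {t : BinaryTree ℕ} {a b : ℕ}, (inorder t).Nodup → Desc t a b → a ≠ b
  | BinaryTree.node c l r, a, b, hnd, h => by
    simp only [inorder, List.nodup_append, List.nodup_cons] at hnd
    rcases h with ⟨rfl, h | h⟩ | h | h
    · intro h'; subst h'
      exact hnd.2.2 _ h _ (by simp) rfl
    · intro h'; subst h'
      exact hnd.2.1.1 h
    · exact desc_ne hnd.1 h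
    · exact desc_ne hnd.2.1.2 h

lemma ext_of_desc : ∀ {t : BinaryTree ℕ} {w : List ℕ},
    (∀ a b, Desc t a b → w.idxOf b < w.idxOf a) → Ext w t
  | BinaryTree.nil, _, _ => trivial
  | BinaryTree.node c l r, w, h => by
    refine ⟨fun x hx => h c x (Or.inl ⟨rfl, Or.inl hx⟩),
            fun x hx => h c x (Or.inl ⟨rfl, Or.inr hx⟩),
            ext_of_desc ?_, ext_of_desc ?_⟩
    · exact fun a b hd => h a b (Or.inr (Or.inl hd))
    · exact fun a b hd => h a b (Or.inr (Or.inr hd))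

lemma desc_of_ext : ∀ {t : BinaryTree ℕ} {w : List ℕ},
    Ext w t → ∀ a b, Desc t a b → w.idxOf b < w.idxOf a
  | BinaryTree.node c l r, w, ⟨h1, h2, h3, h4⟩, a, b, hd => by
    rcases hd with ⟨rfl, h | h⟩ | h | h
    · exact h1 b h
    · exact h2 b h
    · exact desc_of_ext h3 a b h
    · exact desc_of_ext h4 a b h

lemma idx_mem_left {s t : List ℕ} {x : ℕ} (h : x ∈ s) :
    (s ++ t).idxOf x = s.idxOf x ∧ (s ++ t).idxOf x < s.length := by
  constructor
  · exact List.idxOf_append_of_mem h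
  · rw [List.idxOf_append_of_mem h]
    exact List.idxOf_lt_length_iff.mpr h

lemma idx_mem_right {s t : List ℕ} {x : ℕ} (h : x ∉ s) :
    (s ++ t).idxOf x = s.length + t.idxOf x :=
  List.idxOf_append_of_notMem h

lemma desc_idx_post : ∀ {t : BinaryTree ℕ}, (postorder t).Nodup → ∀ {a b : ℕ}, Desc t a b →
    (postorder t).idxOf b < (postorder t).idxOf a
  | BinaryTree.node c l r, hnd, a, b, hd => by
    simp only [postorder] at hnd ⊢
    have hnd2 := hnd
    rw [List.nodup_append] at hnd2
    have hnd3 := hnd2.1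
    rw [List.nodup_append] at hnd3
    rcases hd with ⟨heq, h⟩ | h | h
    · subst heq
      have hidxc : (postorder l ++ postorder r ++ [a]).idxOf a
          = (postorder l ++ postorder r).length := by
        rw [idx_mem_right, List.idxOf_cons_self]
        · omega
        · intro hmem
          exact hnd2.2.2 _ hmem _ (by simp) rfl
      have hb : b ∈ postorder l ++ postorder r := by
        rcases h with h | h
        · exact List.mem_append_left _ ((postorder_perm_inorder l).mem_iff.mpr h)
        · exact List.mem_append_right _ ((postorder_perm_inorder r).mem_iff.mpr h)
      have := idx_mem_left (t := [a]) hb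
      omega
    · have hm := desc_mem h
      have hal : a ∈ postorder l := (postorder_perm_inorder l).mem_iff.mpr hm.1
      have hbl : b ∈ postorder l := (postorder_perm_inorder l).mem_iff.mpr hm.2
      rw [List.append_assoc, (idx_mem_left (t := postorder r ++ [c]) hal).1,
        (idx_mem_left (t := postorder r ++ [c]) hbl).1]
      exact desc_idx_post hnd3.1 h
    · have hm := desc_mem h
      have har : a ∈ postorder r := (postorder_perm_inorder r).mem_iff.mpr hm.1
      have hbr : b ∈ postorder r := (postorder_perm_inorder r).mem_iff.mpr hm.2
      have hanl : a ∉ postorder l := fun h' => hnd3.2.2 _ h' _ har rfl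
      have hbnl : b ∉ postorder l := fun h' => hnd3.2.2 _ h' _ hbr rfl
      rw [List.append_assoc, idx_mem_right hanl, idx_mem_right hbnl,
        (idx_mem_left (t := [c]) har).1, (idx_mem_left (t := [c]) hbr).1]
      have := desc_idx_post hnd3.2.1 h
      omega

lemma desc_idx_rpost : ∀ {t : BinaryTree ℕ}, (rpost t).Nodup → ∀ {a b : ℕ}, Desc t a b →
    (rpost t).idxOf b < (rpost t).idxOf a
  | BinaryTree.node c l r, hnd, a, b, hd => by
    simp only [rpost] at hnd ⊢
    have hnd2 := hnd
    rw [List.nodup_append] at hnd2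
    have hnd3 := hnd2.1
    rw [List.nodup_append] at hnd3
    rcases hd with ⟨heq, h⟩ | h | h
    · subst heq
      have hidxc : (rpost r ++ rpost l ++ [a]).idxOf a
          = (rpost r ++ rpost l).length := by
        rw [idx_mem_right, List.idxOf_cons_self]
        · omega
        · intro hmem
          exact hnd2.2.2 _ hmem _ (by simp) rfl
      have hb : b ∈ rpost r ++ rpost l := by
        rcases h with h | h
        · exact List.mem_append_right _ ((rpost_perm_inorder l).mem_iff.mpr h)
        · exact List.mem_append_left _ ((rpost_perm_inorder r).mem_iff.mpr h)
      have := idx_mem_left (t := [a]) hb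
      omega
    · have hm := desc_mem h
      have hal : a ∈ rpost l := (rpost_perm_inorder l).mem_iff.mpr hm.1
      have hbl : b ∈ rpost l := (rpost_perm_inorder l).mem_iff.mpr hm.2
      have hanl : a ∉ rpost r := fun h' => hnd3.2.2 _ h' _ hal rfl
      have hbnl : b ∉ rpost r := fun h' => hnd3.2.2 _ h' _ hbl rfl
      rw [List.append_assoc, idx_mem_right hanl, idx_mem_right hbnl,
        (idx_mem_left (t := [c]) hal).1, (idx_mem_left (t := [c]) hbl).1]
      have := desc_idx_rpost hnd3.2.1 h
      omega
    · have hm := desc_mem h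
      have har : a ∈ rpost r := (rpost_perm_inorder r).mem_iff.mpr hm.1
      have hbr : b ∈ rpost r := (rpost_perm_inorder r).mem_iff.mpr hm.2
      rw [List.append_assoc, (idx_mem_left (t := rpost l ++ [c]) har).1,
        (idx_mem_left (t := rpost l ++ [c]) hbr).1]
      exact desc_idx_rpost hnd3.1 h

lemma desc_of_idx_post : ∀ {t : BinaryTree ℕ}, IsBST t → (inorder t).Nodup →
    ∀ {a b : ℕ}, a < b → a ∈ inorder t → b ∈ inorder t →
    (postorder t).idxOf b < (postorder t).idxOf a → Desc t a b
  | BinaryTree.node c l r, ⟨h1, h2, h3, h4⟩, hnd, a, b, hab, ha, hb, hidx => by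
    have hndp : (postorder (BinaryTree.node c l r)).Nodup :=
      ((postorder_perm_inorder _).nodup_iff).mpr hnd
    simp only [postorder] at hndp hidx
    have hnd2 := hndp
    rw [List.nodup_append] at hnd2
    have hnd3 := hnd2.1
    rw [List.nodup_append] at hnd3
    have hndin : (inorder l).Nodup ∧ (inorder r).Nodup ∧ c ∉ inorder l ∧ c ∉ inorder r := by
      simp only [inorder, List.nodup_append, List.nodup_cons] at hnd
      exact ⟨hnd.1, hnd.2.1.2, fun h => hnd.2.2 _ h _ (by simp) rfl, hnd.2.1.1⟩
    have hidxc : (postorder l ++ postorder r ++ [c]).idxOf c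
        = (postorder l ++ postorder r).length := by
      rw [idx_mem_right, List.idxOf_cons_self]
      · omega
      · intro hmem
        exact hnd2.2.2 _ hmem _ (by simp) rfl
    simp only [inorder, List.mem_append, List.mem_cons] at ha hb
    rcases hb with hb | hb | hb
    · -- b ∈ inorder l
      rcases ha with ha | ha | ha
      · -- both in l
        have hal : a ∈ postorder l := (postorder_perm_inorder l).mem_iff.mpr ha
        have hbl : b ∈ postorder l := (postorder_perm_inorder l).mem_iff.mpr hb
        rw [List.append_assoc, (idx_mem_left (t := postorder r ++ [c]) hal).1,
          (idx_mem_left (t := postorder r ++ [c]) hbl).1] at hidx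
        exact Or.inr (Or.inl (desc_of_idx_post h3 hndin.1 hab ha hb hidx))
      · -- a = c, b ∈ l : contradiction with a < b ≤ c
        subst ha
        exact absurd (h1 b hb) (not_le.mpr hab)
      · -- a ∈ r, b ∈ l : b ≤ c < a contradicts a < b
        exact absurd ((h1 b hb).trans_lt (h2 a ha)) (not_lt.mpr hab.le)
    · -- b = c : impossible since idx c is max
      subst hb
      rcases ha with ha | ha | ha
      · have hal : a ∈ postorder l := (postorder_perm_inorder l).mem_iff.mpr ha
        have := idx_mem_left (t := [b]) (List.mem_append_left (postorder r) hal)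
        omega
      · omega
      · have har : a ∈ postorder r := (postorder_perm_inorder r).mem_iff.mpr ha
        have := idx_mem_left (t := [b]) (List.mem_append_right (postorder l) har)
        omega
    · -- b ∈ inorder r
      rcases ha with ha | ha | ha
      · -- a ∈ l, b ∈ r : idx a < |pl| ≤ idx b, contradiction
        have hal : a ∈ postorder l := (postorder_perm_inorder l).mem_iff.mpr ha
        have hbr : b ∈ postorder r := (postorder_perm_inorder r).mem_iff.mpr hb
        have hbnl : b ∉ postorder l := fun h' => hnd3.2.2 _ h' _ hbr rfl
        have h5 := idx_mem_left (t := postorder r ++ [c]) hal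
        rw [List.append_assoc, h5.1, idx_mem_right hbnl] at hidx
        have h6 := List.idxOf_lt_length_iff.mpr hal
        exfalso
        omega
      · -- a = c : Desc at root
        subst ha
        exact Or.inl ⟨rfl, Or.inr hb⟩
      · -- both in r
        have har : a ∈ postorder r := (postorder_perm_inorder r).mem_iff.mpr ha
        have hbr : b ∈ postorder r := (postorder_perm_inorder r).mem_iff.mpr hb
        have hanl : a ∉ postorder l := fun h' => hnd3.2.2 _ h' _ har rfl
        have hbnl : b ∉ postorder l := fun h' => hnd3.2.2 _ h' _ hbr rfl
        rw [List.append_assoc, idx_mem_right hanl, idx_mem_right hbnl,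
          (idx_mem_left (t := [c]) har).1, (idx_mem_left (t := [c]) hbr).1] at hidx
        exact Or.inr (Or.inr (desc_of_idx_post h4 hndin.2.1 hab ha hb (by omega)))

lemma idx_rpost_of_not_desc : ∀ {t : BinaryTree ℕ}, IsBST t → (inorder t).Nodup →
    ∀ {a b : ℕ}, a < b → a ∈ inorder t → b ∈ inorder t → ¬ Desc t b a →
    (rpost t).idxOf b < (rpost t).idxOf a
  | BinaryTree.node c l r, ⟨h1, h2, h3, h4⟩, hnd, a, b, hab, ha, hb, hndesc => by
    have hndp : (rpost (BinaryTree.node c l r)).Nodup :=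
      ((rpost_perm_inorder _).nodup_iff).mpr hnd
    simp only [rpost] at hndp ⊢
    have hnd2 := hndp
    rw [List.nodup_append] at hnd2
    have hnd3 := hnd2.1
    rw [List.nodup_append] at hnd3
    have hndin : (inorder l).Nodup ∧ (inorder r).Nodup := by
      simp only [inorder, List.nodup_append, List.nodup_cons] at hnd
      exact ⟨hnd.1, hnd.2.1.2⟩
    have hidxc : (rpost r ++ rpost l ++ [c]).idxOf c
        = (rpost r ++ rpost l).length := by
      rw [idx_mem_right, List.idxOf_cons_self]
      · omega
      · intro hmem
        exact hnd2.2.2 _ hmem _ (by simp) rfl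
    simp only [inorder, List.mem_append, List.mem_cons] at ha hb
    rcases hb with hb | hb | hb
    · -- b ∈ inorder l
      rcases ha with ha | ha | ha
      · -- both in l
        have hal : a ∈ rpost l := (rpost_perm_inorder l).mem_iff.mpr ha
        have hbl : b ∈ rpost l := (rpost_perm_inorder l).mem_iff.mpr hb
        have hanl : a ∉ rpost r := fun h' => hnd3.2.2 _ h' _ hal rfl
        have hbnl : b ∉ rpost r := fun h' => hnd3.2.2 _ h' _ hbl rfl
        rw [List.append_assoc, idx_mem_right hanl, idx_mem_right hbnl,
          (idx_mem_left (t := [c]) hal).1, (idx_mem_left (t := [c]) hbl).1]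
        have : ¬ Desc l b a := fun h => hndesc (Or.inr (Or.inl h))
        have := idx_rpost_of_not_desc h3 hndin.1 hab ha hb this
        omega
      · -- a = c : impossible since b ∈ l means b ≤ c = a < b
        subst ha
        exact absurd (h1 b hb) (not_le.mpr hab)
      · -- a ∈ r, b ∈ l : b ≤ c < a contradicts a < b
        exact absurd ((h1 b hb).trans_lt (h2 a ha)) (not_lt.mpr hab.le)
    · -- b = c : then a ∈ l ∨ a ∈ r (a ≠ c), so Desc t c a, contradiction
      subst hb
      exfalso
      rcases ha with ha | ha | ha
      · exact hndesc (Or.inl ⟨rfl, Or.inl ha⟩)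
      · omega
      · exact hndesc (Or.inl ⟨rfl, Or.inr ha⟩)
    · -- b ∈ inorder r
      rcases ha with ha | ha | ha
      · -- a ∈ l, b ∈ r : idx b < |pr| ≤ idx a
        have hal : a ∈ rpost l := (rpost_perm_inorder l).mem_iff.mpr ha
        have hbr : b ∈ rpost r := (rpost_perm_inorder r).mem_iff.mpr hb
        have hanl : a ∉ rpost r := fun h' => hnd3.2.2 _ h' _ hal rfl
        rw [List.append_assoc, idx_mem_right hanl,
          (idx_mem_left (t := rpost l ++ [c]) hbr).1]
        have := List.idxOf_lt_length_iff.mpr hbr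
        omega
      · -- a = c, b ∈ r : idx b < |pr| + |pl| = idx c
        subst ha
        have hbr : b ∈ rpost r := (rpost_perm_inorder r).mem_iff.mpr hb
        have h6 := idx_mem_left (t := rpost l ++ [a]) hbr
        rw [← List.append_assoc] at h6
        have h7 : (rpost r ++ rpost l).length = (rpost r).length + (rpost l).length :=
          List.length_append
        have h8 : (rpost r).length ≤ (rpost r ++ rpost l).length := by omega
        omega
      · -- both in r
        have har : a ∈ rpost r := (rpost_perm_inorder r).mem_iff.mpr ha
        have hbr : b ∈ rpost r := (rpost_perm_inorder r).mem_iff.mpr hb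
        rw [List.append_assoc, (idx_mem_left (t := rpost l ++ [c]) har).1,
          (idx_mem_left (t := rpost l ++ [c]) hbr).1]
        have : ¬ Desc r b a := fun h => hndesc (Or.inr (Or.inr h))
        exact idx_rpost_of_not_desc h4 hndin.2 hab ha hb this

lemma sorted_range' (s n : ℕ) : (List.range' s n).Pairwise (· ≤ ·) := by
  induction n generalizing s with
  | zero => simp
  | succ n ih =>
    rw [List.range'_succ]
    refine List.pairwise_cons.mpr ⟨?_, ih (s + 1)⟩
    intro b hb
    have := (List.mem_range'_1.mp hb).1
    omega

end SylvProof

open Sylv SylvProof in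
/-- each sylvester class of permutations is an interval of the
right weak order. -/
theorem stmt11 (n : ℕ) (T : BinaryTree Unit)
    (hT : ∃ σ, Sylv.IsPermWord n σ ∧ Sylv.shape (Sylv.P σ) = T) :
    ∃ u v : List ℕ, Sylv.IsPermWord n u ∧ Sylv.IsPermWord n v ∧
      ∀ w, Sylv.IsPermWord n w →
        (Sylv.shape (Sylv.P w) = T ↔ (Sylv.weakLe u w ∧ Sylv.weakLe w v)) := by
  classical
  obtain ⟨σ, hσ, hσT⟩ := hT
  rw [Sylv.IsPermWord] at hσ
  set t := Sylv.P σ with ht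
  have hbst : IsBST t := isBST_P σ
  have hperm_in : (inorder t).Perm (List.range' 1 n) := (inorder_P_perm σ).trans hσ
  have hsortedr : (List.range' 1 n).Pairwise (· ≤ ·) := sorted_range' 1 n
  have hin_eq : inorder t = List.range' 1 n :=
    List.Perm.eq_of_pairwise' (sorted_inorder hbst) hsortedr hperm_in
  have hndr : (List.range' 1 n).Nodup := List.nodup_range' (s := 1) (n := n)
  have hnd_in : (inorder t).Nodup := hin_eq ▸ hndr
  have hnd_post : (postorder t).Nodup := ((postorder_perm_inorder t).nodup_iff).mpr hnd_in
  have hnd_rp : (rpost t).Nodup := ((rpost_perm_inorder t).nodup_iff).mpr hnd_in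
  refine ⟨postorder t, rpost t, ?_, ?_, ?_⟩
  · exact (postorder_perm_inorder t).trans (hin_eq ▸ List.Perm.refl _)
  · exact (rpost_perm_inorder t).trans (hin_eq ▸ List.Perm.refl _)
  intro w hw
  rw [Sylv.IsPermWord] at hw
  have hwnd : w.Nodup := hw.nodup_iff.mpr hndr
  have hmemw : ∀ x, x ∈ w ↔ x ∈ inorder t := fun x => by rw [hw.mem_iff, hin_eq]
  have hmempost : ∀ x, x ∈ postorder t ↔ x ∈ inorder t :=
    fun x => (postorder_perm_inorder t).mem_iff
  have hmemrp : ∀ x, x ∈ rpost t ↔ x ∈ inorder t :=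
    fun x => (rpost_perm_inorder t).mem_iff
  constructor
  · intro hshape
    have hPw : Sylv.P w = t := by
      have h1 : inorder (Sylv.P w) = List.range' 1 n :=
        List.Perm.eq_of_pairwise'
          (sorted_inorder (isBST_P w)) hsortedr ((inorder_P_perm w).trans hw)
      exact eq_of_shape_of_inorder
        (by rw [hshape, hσT]) (h1.trans hin_eq.symm)
    have hext : Ext w t := hPw ▸ ext_P hwnd
    constructor
    · rintro ⟨a, b⟩ ⟨hab, hau, hbu, hidx⟩
      have hd : Desc t a b := desc_of_idx_post hbst hnd_in hab
        ((hmempost a).mp hau) ((hmempost b).mp hbu) hidx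
      exact ⟨hab, (hmemw a).mpr (desc_mem hd).1, (hmemw b).mpr (desc_mem hd).2,
        desc_of_ext hext a b hd⟩
    · rintro ⟨a, b⟩ ⟨hab, haw, hbw, hidx⟩
      have hidx' : w.idxOf b < w.idxOf a := hidx
      have hnd_d : ¬ Desc t b a := by
        intro hd
        have := desc_of_ext hext b a hd
        omega
      exact ⟨hab, (hmemrp a).mpr ((hmemw a).mp haw), (hmemrp b).mpr ((hmemw b).mp hbw),
        idx_rpost_of_not_desc hbst hnd_in hab
          ((hmemw a).mp haw) ((hmemw b).mp hbw) hnd_d⟩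
  · rintro ⟨hle1, hle2⟩
    have hext : Ext w t := by
      apply ext_of_desc
      intro a b hd
      have hane : a ≠ b := desc_ne hnd_in hd
      have hma := (desc_mem hd).1
      have hmb := (desc_mem hd).2
      rcases lt_or_gt_of_ne hane with h' | h'
      · have hmem : ((a, b) : ℕ × ℕ) ∈ InvV (postorder t) :=
          ⟨h', (hmempost a).mpr hma, (hmempost b).mpr hmb, desc_idx_post hnd_post hd⟩
        exact (hle1 hmem).2.2.2
      · have hnv : ((b, a) : ℕ × ℕ) ∉ InvV (rpost t) := by
          rintro ⟨-, -, -, hidx⟩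
          have hidx' : (rpost t).idxOf a < (rpost t).idxOf b := hidx
          have := desc_idx_rpost hnd_rp hd
          omega
        have hnw : ((b, a) : ℕ × ℕ) ∉ InvV w := fun h => hnv (hle2 h)
        have h1 : ¬ (w.idxOf a < w.idxOf b) := by
          intro hidx
          exact hnw ⟨h', (hmemw b).mpr hmb, (hmemw a).mpr hma, hidx⟩
        have h2 : w.idxOf a ≠ w.idxOf b := fun h'' =>
          hane ((List.idxOf_inj ((hmemw a).mpr hma)).mp h'')
        omega
    have hPw : Sylv.P w = t := by
      refine P_eq_of_ext hwnd hbst ?_ hext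
      rw [hin_eq]
      exact hw.symm
    rw [hPw]
    exact hσT
end

section
/- The number of permutations σ of {1,...,n} whose binary search tree P(σ) has a given shape T equals n! divided by the product over all nodes v of T of h_v, where h_v is the number of nodes of the subtree rooted at v (hook length formula for binary trees). -/
namespace Sylv

variable {α : Type*}

lemma numNodes_insert (x : ℕ) (t : BinaryTree ℕ) : (insert x t).numNodes = t.numNodes + 1 := by
  induction t with
  | nil => rfl
  | node a l r ihl ihr =>
    simp only [insert]
    split <;> simp [BinaryTree.numNodes, ihl, ihr] <;> omega

lemma numNodes_P (w : List ℕ) : (P w).numNodes = w.length := by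
  induction w with
  | nil => rfl
  | cons x w ih => simp [P, List.foldr_cons, numNodes_insert] at *; omega

lemma numNodes_shape (t : BinaryTree ℕ) : (shape t).numNodes = t.numNodes := by
  induction t with
  | nil => rfl
  | node a l r ihl ihr => simp [shape, BinaryTree.numNodes, ihl, ihr]

def tmap (f : ℕ → ℕ) : BinaryTree ℕ → BinaryTree ℕ
  | BinaryTree.nil => BinaryTree.nil
  | BinaryTree.node a l r => BinaryTree.node (f a) (tmap f l) (tmap f r)

lemma shape_tmap (f : ℕ → ℕ) (t : BinaryTree ℕ) : shape (tmap f t) = shape t := by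
  induction t with
  | nil => rfl
  | node a l r ihl ihr => simp [tmap, shape, ihl, ihr]

lemma insert_shift (k x : ℕ) (t : BinaryTree ℕ) :
    insert (x + k) (tmap (· + k) t) = tmap (· + k) (insert x t) := by
  induction t with
  | nil => rfl
  | node a l r ihl ihr =>
    simp only [tmap, insert]
    by_cases h : x ≤ a
    · rw [if_pos h, if_pos (by omega), ihl]; rfl
    · rw [if_neg h, if_neg (by omega), ihr]; rfl

lemma P_shift (k : ℕ) (w : List ℕ) : P (shift k w) = tmap (· + k) (P w) := by
  induction w with
  | nil => rfl
  | cons x w ih => simp [shift, P] at *; rw [ih, insert_shift]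

lemma shape_P_shift (k : ℕ) (w : List ℕ) : shape (P (shift k w)) = shape (P w) := by
  rw [P_shift, shape_tmap]

lemma foldr_insert_node (c : ℕ) (tl tr : BinaryTree ℕ) (w : List ℕ) :
    w.foldr insert (BinaryTree.node c tl tr) =
      BinaryTree.node c ((w.filter (fun x => decide (x ≤ c))).foldr insert tl)
        ((w.filter (fun x => !decide (x ≤ c))).foldr insert tr) := by
  induction w with
  | nil => rfl
  | cons x w ih =>
    by_cases h : x ≤ c <;>
      simp [List.filter_cons, h, ih, insert]

lemma P_append_singleton (w : List ℕ) (c : ℕ) :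
    P (w ++ [c]) = BinaryTree.node c (P (w.filter (fun x => decide (x ≤ c))))
      (P (w.filter (fun x => !decide (x ≤ c)))) := by
  simp only [P, List.foldr_append]
  exact foldr_insert_node c _ _ w


def merge : List Bool → List ℕ → List ℕ → List ℕ
  | [], _, _ => []
  | true :: ms, [], _ => []
  | true :: ms, x :: u, v => x :: merge ms u v
  | false :: ms, _, [] => []
  | false :: ms, u, y :: v => y :: merge ms u v

lemma merge_perm : ∀ (m : List Bool) (u v : List ℕ),
    m.count true = u.length → m.count false = v.length → (merge m u v).Perm (u ++ v)
  | [], u, v, ht, hf => by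
      simp at ht hf
      simp [merge, List.length_eq_zero_iff.mp ht.symm, List.length_eq_zero_iff.mp hf.symm]
  | true :: ms, u, v, ht, hf => by
      simp [List.count_cons] at ht hf
      match u, ht with
      | x :: u, ht =>
        simp only [List.length_cons] at ht
        simpa [merge] using (merge_perm ms u v (by omega) (by omega)).cons x
  | false :: ms, u, v, ht, hf => by
      simp [List.count_cons] at ht hf
      match v, hf with
      | y :: v, hf =>
        simp only [List.length_cons] at hf
        exact ((merge_perm ms u v (by omega) (by omega)).cons y).trans
          List.perm_middle.symm

lemma merge_filter_pos (p : ℕ → Bool) : ∀ (m : List Bool) (u v : List ℕ),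
    m.count true = u.length → m.count false = v.length →
    (∀ x ∈ u, p x = true) → (∀ x ∈ v, p x = false) →
    (merge m u v).filter p = u
  | [], u, v, ht, hf, _, _ => by
      simp at ht hf
      simp [merge, List.length_eq_zero_iff.mp ht.symm]
  | true :: ms, u, v, ht, hf, hp, hq => by
      simp [List.count_cons] at ht hf
      match u, ht with
      | x :: u, ht =>
        simp only [List.length_cons] at ht
        simp [merge, List.filter_cons, hp x (by simp),
          merge_filter_pos p ms u v (by omega) (by omega)
            (fun y hy => hp y (by simp [hy])) hq]
  | false :: ms, u, v, ht, hf, hp, hq => by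
      simp [List.count_cons] at ht hf
      match v, hf with
      | y :: v, hf =>
        simp only [List.length_cons] at hf
        simp [merge, List.filter_cons, hq y (by simp),
          merge_filter_pos p ms u v (by omega) (by omega) hp
            (fun z hz => hq z (by simp [hz]))]

lemma merge_filter_neg (p : ℕ → Bool) : ∀ (m : List Bool) (u v : List ℕ),
    m.count true = u.length → m.count false = v.length →
    (∀ x ∈ u, p x = true) → (∀ x ∈ v, p x = false) →
    (merge m u v).filter (fun x => !p x) = v
  | [], u, v, ht, hf, _, _ => by
      simp at ht hf
      simp [merge, List.length_eq_zero_iff.mp hf.symm]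
  | true :: ms, u, v, ht, hf, hp, hq => by
      simp [List.count_cons] at ht hf
      match u, ht with
      | x :: u, ht =>
        simp only [List.length_cons] at ht
        simp [merge, List.filter_cons, hp x (by simp),
          merge_filter_neg p ms u v (by omega) (by omega)
            (fun y hy => hp y (by simp [hy])) hq]
  | false :: ms, u, v, ht, hf, hp, hq => by
      simp [List.count_cons] at ht hf
      match v, hf with
      | y :: v, hf =>
        simp only [List.length_cons] at hf
        simp [merge, List.filter_cons, hq y (by simp),
          merge_filter_neg p ms u v (by omega) (by omega) hp
            (fun z hz => hq z (by simp [hz]))]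

lemma merge_map (p : ℕ → Bool) : ∀ (m : List Bool) (u v : List ℕ),
    m.count true = u.length → m.count false = v.length →
    (∀ x ∈ u, p x = true) → (∀ x ∈ v, p x = false) →
    (merge m u v).map p = m
  | [], u, v, ht, hf, _, _ => by simp [merge]
  | true :: ms, u, v, ht, hf, hp, hq => by
      simp [List.count_cons] at ht hf
      match u, ht with
      | x :: u, ht =>
        simp only [List.length_cons] at ht
        simp [merge, hp x (by simp),
          merge_map p ms u v (by omega) (by omega)
            (fun y hy => hp y (by simp [hy])) hq]
  | false :: ms, u, v, ht, hf, hp, hq => by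
      simp [List.count_cons] at ht hf
      match v, hf with
      | y :: v, hf =>
        simp only [List.length_cons] at hf
        simp [merge, hq y (by simp),
          merge_map p ms u v (by omega) (by omega) hp
            (fun z hz => hq z (by simp [hz]))]

lemma merge_recover (p : ℕ → Bool) (w : List ℕ) :
    merge (w.map p) (w.filter p) (w.filter (fun x => !p x)) = w := by
  induction w with
  | nil => rfl
  | cons x w ih =>
    by_cases h : p x = true
    · simp [List.filter_cons, h, merge, ih]
    · simp only [Bool.not_eq_true] at h
      simp [List.filter_cons, h, merge, ih]



def maskOf (s : Finset ℕ) (m : ℕ) : List Bool :=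
  (List.range m).map (fun i => decide (i ∈ s))

lemma count_true_add_count_false (l : List Bool) :
    l.count true + l.count false = l.length := by
  induction l with
  | nil => rfl
  | cons b l ih => cases b <;> simp [List.count_cons] <;> omega

lemma countP_range (q : ℕ → Bool) (m : ℕ) :
    (List.range m).countP q = ((Finset.range m).filter (fun i => q i)).card := by
  induction m with
  | zero => rfl
  | succ m ih =>
    rw [List.range_succ, List.countP_append, Finset.range_add_one, Finset.filter_insert]
    by_cases h : q m = true
    · rw [if_pos h, Finset.card_insert_of_notMem (by simp)]
      simp [List.countP_cons, h, ih]
    · rw [if_neg h, ih]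
      simp [List.countP_cons, h]

lemma length_maskOf (s : Finset ℕ) (m : ℕ) : (maskOf s m).length = m := by
  simp [maskOf]

lemma count_true_maskOf (s : Finset ℕ) (m : ℕ) (hs : s ⊆ Finset.range m) :
    (maskOf s m).count true = s.card := by
  rw [maskOf, List.count_eq_countP, List.countP_map]
  have : (List.range m).countP ((fun a => a == true) ∘ fun i => decide (i ∈ s)) =
      (List.range m).countP (fun i => decide (i ∈ s)) := by
    apply List.countP_congr; intro x _; simp
  rw [this, countP_range]
  congr 1
  rw [Finset.filter_congr (q := fun i => i ∈ s) (by intro x _; simp),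
    Finset.filter_mem_eq_inter, Finset.inter_eq_right.mpr hs]

lemma count_false_maskOf (s : Finset ℕ) (m : ℕ) (hs : s ⊆ Finset.range m) :
    (maskOf s m).count false = m - s.card := by
  have := count_true_add_count_false (maskOf s m)
  rw [length_maskOf, count_true_maskOf s m hs] at this
  omega

lemma getElem_maskOf (s : Finset ℕ) (m i : ℕ) (hi : i < m) :
    (maskOf s m)[i]'(by rw [length_maskOf]; exact hi) = decide (i ∈ s) := by
  simp [maskOf]

lemma maskOf_injOn (s s' : Finset ℕ) (m : ℕ) (hs : s ⊆ Finset.range m)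
    (hs' : s' ⊆ Finset.range m) (h : maskOf s m = maskOf s' m) : s = s' := by
  ext i
  by_cases hi : i < m
  · have key : decide (i ∈ s) = decide (i ∈ s') := by
      rw [← getElem_maskOf s m i hi, ← getElem_maskOf s' m i hi]
      exact List.getElem_of_eq h _
    simpa using key
  · constructor <;> intro hmem
    · exact absurd (Finset.mem_range.mp (hs hmem)) hi
    · exact absurd (Finset.mem_range.mp (hs' hmem)) hi

lemma countP_range_getD (w : List ℕ) (q : ℕ → Bool) :
    (List.range w.length).countP (fun i => q (w.getD i 0)) = w.countP q := by
  induction w with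
  | nil => rfl
  | cons x w ih =>
    rw [List.length_cons, List.range_succ_eq_map, List.countP_cons, List.countP_map]
    simp only [List.getD_cons_zero, Function.comp]
    have : (List.range w.length).countP ((fun i => q ((x :: w).getD i 0)) ∘ Nat.succ) =
        (List.range w.length).countP (fun i => q (w.getD i 0)) := by
      apply List.countP_congr; intro i _; simp [Function.comp]
    rw [this, ih, List.countP_cons]

lemma maskOf_eq_map (w : List ℕ) (m : ℕ) (hw : w.length = m) (q : ℕ → Bool) :
    maskOf ((Finset.range m).filter (fun i => q (w.getD i 0))) m = w.map q := by
  apply List.ext_getElem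
  · simp [length_maskOf, hw]
  · intro i h1 h2
    rw [getElem_maskOf _ _ _ (by rwa [length_maskOf] at h1)]
    simp only [List.getElem_map]
    have hi : i < m := by rwa [length_maskOf] at h1
    have hiw : i < w.length := by omega
    simp only [Finset.mem_filter, Finset.mem_range]
    rw [List.getD_eq_getElem w 0 hiw]
    by_cases h : q w[i] = true
    · simp [h, hi]
    · simp only [Bool.not_eq_true] at h; simp [h, hi]

lemma filter_range'_le (c n : ℕ) (h : c ≤ n) :
    (List.range' 1 n).filter (fun x => decide (x ≤ c)) = List.range' 1 c := by
  have hsplit : List.range' 1 c ++ List.range' (1 + c) (n - c) = List.range' 1 n := by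
    have := List.range'_append (s := 1) (m := c) (n := n - c) (step := 1)
    simp only [one_mul] at this
    rw [this]; congr 1; omega
  rw [← hsplit, List.filter_append, List.filter_eq_self.mpr, List.filter_eq_nil_iff.mpr]
  · simp
  · intro x hx
    rw [List.mem_range'_1] at hx
    simp; omega
  · intro x hx
    rw [List.mem_range'_1] at hx
    simp; omega

lemma filter_range'_gt (c n : ℕ) (h : c ≤ n) :
    (List.range' 1 n).filter (fun x => !decide (x ≤ c)) = List.range' (c + 1) (n - c) := by
  have hsplit : List.range' 1 c ++ List.range' (1 + c) (n - c) = List.range' 1 n := by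
    have := List.range'_append (s := 1) (m := c) (n := n - c) (step := 1)
    simp only [one_mul] at this
    rw [this]; congr 1; omega
  rw [← hsplit, List.filter_append, List.filter_eq_nil_iff.mpr, List.filter_eq_self.mpr]
  · simp; omega
  · intro x hx
    rw [List.mem_range'_1] at hx
    simp; omega
  · intro x hx
    rw [List.mem_range'_1] at hx
    simp; omega

lemma shift_range' (k s n : ℕ) : shift k (List.range' s n) = List.range' (s + k) n := by
  have : shift k (List.range' s n) = (List.range' s n).map (fun x => k + x) := by
    simp [shift, Nat.add_comm]
  rw [this, List.map_add_range']
  congr 1; omega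


-- Main bijection helpers

lemma perm_u_bound {a : ℕ} {u : List ℕ} (hu : u.Perm (List.range' 1 a)) :
    ∀ x ∈ u, 1 ≤ x ∧ x ≤ a := by
  intro x hx
  have := hu.subset hx
  rw [List.mem_range'_1] at this
  omega

lemma shift_perm {a b : ℕ} {v : List ℕ} (hv : v.Perm (List.range' 1 b)) :
    (shift (a + 1) v).Perm (List.range' (a + 2) b) := by
  have h := hv.map (fun x => x + (a + 1))
  have h2 : (List.range' 1 b).map (fun x => x + (a + 1)) = List.range' (a + 2) b := by
    rw [show a + 2 = 1 + (a + 1) by omega]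
    simpa [shift] using shift_range' (a + 1) 1 b
  rw [h2] at h
  exact h

section Bij

variable {a b : ℕ} {s : Finset ℕ} {u v : List ℕ}

lemma mask_count_true (hs : s ⊆ Finset.range (a + b)) (hsc : s.card = a)
    (hu : u.Perm (List.range' 1 a)) :
    (maskOf s (a + b)).count true = u.length := by
  rw [count_true_maskOf s _ hs, hsc, hu.length_eq, List.length_range']

lemma mask_count_false (hs : s ⊆ Finset.range (a + b)) (hsc : s.card = a)
    (hv : v.Perm (List.range' 1 b)) :
    (maskOf s (a + b)).count false = (shift (a + 1) v).length := by
  rw [count_false_maskOf s _ hs, hsc, (shift_perm hv).length_eq, List.length_range']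
  omega

lemma forward_perm (hs : s ⊆ Finset.range (a + b)) (hsc : s.card = a)
    (hu : u.Perm (List.range' 1 a)) (hv : v.Perm (List.range' 1 b)) :
    (merge (maskOf s (a + b)) u (shift (a + 1) v) ++ [a + 1]).Perm
      (List.range' 1 (a + b + 1)) := by
  have h1 := merge_perm (maskOf s (a + b)) u (shift (a + 1) v)
    (mask_count_true hs hsc hu) (mask_count_false hs hsc hv)
  have h2 : (u ++ shift (a + 1) v).Perm (List.range' 1 a ++ List.range' (a + 2) b) :=
    hu.append (shift_perm hv)
  have h3 : List.range' 1 a ++ List.range' (a + 1) (b + 1) = List.range' 1 (a + b + 1) := by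
    have h := List.range'_append (s := 1) (m := a) (n := b + 1) (step := 1)
    simp only [one_mul] at h
    rw [show 1 + a = a + 1 by omega] at h
    rw [h]; congr 1
  have step1 : (merge (maskOf s (a + b)) u (shift (a + 1) v) ++ [a + 1]).Perm
      ((a + 1) :: (List.range' 1 a ++ List.range' (a + 2) b)) :=
    ((h1.append_right _).trans (List.perm_append_singleton _ _)).trans (h2.cons _)
  have step2 : List.range' 1 a ++ (a + 1) :: List.range' (a + 2) b
      = List.range' 1 (a + b + 1) := by
    rw [← h3, List.range'_succ]
  rw [← step2]
  exact step1.trans List.perm_middle.symm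

lemma forward_filters (hs : s ⊆ Finset.range (a + b)) (hsc : s.card = a)
    (hu : u.Perm (List.range' 1 a)) (hv : v.Perm (List.range' 1 b)) :
    (merge (maskOf s (a + b)) u (shift (a + 1) v)).filter (fun x => decide (x ≤ a + 1)) = u ∧
    (merge (maskOf s (a + b)) u (shift (a + 1) v)).filter (fun x => !decide (x ≤ a + 1)) =
      shift (a + 1) v := by
  have hup : ∀ x ∈ u, (fun x => decide (x ≤ a + 1)) x = true := by
    intro x hx
    have := perm_u_bound hu x hx
    simp; omega
  have hvp : ∀ x ∈ shift (a + 1) v, (fun x => decide (x ≤ a + 1)) x = false := by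
    intro x hx
    have := (shift_perm hv).subset hx
    rw [List.mem_range'_1] at this
    simp; omega
  exact ⟨merge_filter_pos _ _ _ _ (mask_count_true hs hsc hu) (mask_count_false hs hsc hv) hup hvp,
    merge_filter_neg _ _ _ _ (mask_count_true hs hsc hu) (mask_count_false hs hsc hv) hup hvp⟩

lemma forward_shape (hs : s ⊆ Finset.range (a + b)) (hsc : s.card = a)
    (hu : u.Perm (List.range' 1 a)) (hv : v.Perm (List.range' 1 b)) (l r : BinaryTree Unit)
    (hul : shape (P u) = l) (hvr : shape (P v) = r) :
    shape (P (merge (maskOf s (a + b)) u (shift (a + 1) v) ++ [a + 1])) = BinaryTree.node () l r := by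
  obtain ⟨hfu, hfv⟩ := forward_filters hs hsc hu hv
  rw [P_append_singleton, hfu, hfv, shape, shape_P_shift, hul, hvr]

end Bij

lemma merge_inj {a b : ℕ} {s s' : Finset ℕ} {u u' v v' : List ℕ}
    (hs : s ⊆ Finset.range (a + b)) (hsc : s.card = a)
    (hs' : s' ⊆ Finset.range (a + b)) (hsc' : s'.card = a)
    (hu : u.Perm (List.range' 1 a)) (hv : v.Perm (List.range' 1 b))
    (hu' : u'.Perm (List.range' 1 a)) (hv' : v'.Perm (List.range' 1 b))
    (heq : merge (maskOf s (a + b)) u (shift (a + 1) v) ++ [a + 1] =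
      merge (maskOf s' (a + b)) u' (shift (a + 1) v') ++ [a + 1]) :
    s = s' ∧ u = u' ∧ v = v' := by
  have hm : merge (maskOf s (a + b)) u (shift (a + 1) v) =
      merge (maskOf s' (a + b)) u' (shift (a + 1) v') := by
    have := congrArg List.dropLast heq
    simpa [List.dropLast_concat] using this
  have hup : ∀ x ∈ u, (fun x => decide (x ≤ a + 1)) x = true := by
    intro x hx; have := perm_u_bound hu x hx; simp; omega
  have hvp : ∀ x ∈ shift (a + 1) v, (fun x => decide (x ≤ a + 1)) x = false := by
    intro x hx
    have := (shift_perm hv).subset hx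
    rw [List.mem_range'_1] at this; simp; omega
  have hup' : ∀ x ∈ u', (fun x => decide (x ≤ a + 1)) x = true := by
    intro x hx; have := perm_u_bound hu' x hx; simp; omega
  have hvp' : ∀ x ∈ shift (a + 1) v', (fun x => decide (x ≤ a + 1)) x = false := by
    intro x hx
    have := (shift_perm hv').subset hx
    rw [List.mem_range'_1] at this; simp; omega
  have hmask : maskOf s (a + b) = maskOf s' (a + b) := by
    rw [← merge_map _ _ _ _ (mask_count_true hs hsc hu) (mask_count_false hs hsc hv) hup hvp,
      ← merge_map _ _ _ _ (mask_count_true hs' hsc' hu') (mask_count_false hs' hsc' hv')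
        hup' hvp', hm]
  refine ⟨maskOf_injOn s s' _ hs hs' hmask, ?_, ?_⟩
  · rw [← merge_filter_pos _ _ _ _ (mask_count_true hs hsc hu)
        (mask_count_false hs hsc hv) hup hvp,
      ← merge_filter_pos _ _ _ _ (mask_count_true hs' hsc' hu')
        (mask_count_false hs' hsc' hv') hup' hvp', hm]
  · have hsv : shift (a + 1) v = shift (a + 1) v' := by
      rw [← merge_filter_neg _ _ _ _ (mask_count_true hs hsc hu)
          (mask_count_false hs hsc hv) hup hvp,
        ← merge_filter_neg _ _ _ _ (mask_count_true hs' hsc' hu')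
          (mask_count_false hs' hsc' hv') hup' hvp', hm]
    have hinj : Function.Injective (fun x : ℕ => x + (a + 1)) := fun x y h => Nat.add_right_cancel h
    exact List.map_injective_iff.mpr hinj hsv

set_option maxHeartbeats 1000000 in
lemma backward {a b : ℕ} {l r : BinaryTree Unit} {w : List ℕ}
    (hw : w.Perm (List.range' 1 (a + b + 1)))
    (hla : l.numNodes = a) (hrb : r.numNodes = b)
    (hsh : shape (P w) = BinaryTree.node () l r) :
    ∃ s u v, s ⊆ Finset.range (a + b) ∧ s.card = a ∧
      u.Perm (List.range' 1 a) ∧ v.Perm (List.range' 1 b) ∧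
      shape (P u) = l ∧ shape (P v) = r ∧
      merge (maskOf s (a + b)) u (shift (a + 1) v) ++ [a + 1] = w := by
  have hlen : w.length = a + b + 1 := by
    rw [hw.length_eq, List.length_range']
  have hne : w ≠ [] := by
    intro h; rw [h] at hlen; simp at hlen
  set c := w.getLast hne with hc_def
  have hw_eq : w.dropLast ++ [c] = w := List.dropLast_append_getLast hne
  set w' := w.dropLast with hw'_def
  have hlen' : w'.length = a + b := by
    rw [hw'_def, List.length_dropLast, hlen]
    omega
  -- split the tree
  have hsplit : P w = BinaryTree.node c (P (w'.filter (fun x => decide (x ≤ c))))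
      (P (w'.filter (fun x => !decide (x ≤ c)))) := by
    conv_lhs => rw [← hw_eq]
    exact P_append_singleton w' c
  rw [hsplit] at hsh
  simp only [shape, BinaryTree.node.injEq, true_and] at hsh
  obtain ⟨h1, h2⟩ := hsh
  -- the last letter is a+1
  have hc_mem : c ∈ List.range' 1 (a + b + 1) := hw.subset (List.getLast_mem hne)
  rw [List.mem_range'_1] at hc_mem
  have hfu_len : (w'.filter (fun x => decide (x ≤ c))).length = a := by
    rw [← numNodes_P (w'.filter (fun x => decide (x ≤ c))), ← numNodes_shape, h1, hla]
  have hwfilter : w.filter (fun x => decide (x ≤ c)) =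
      (w'.filter (fun x => decide (x ≤ c))) ++ [c] := by
    conv_lhs => rw [← hw_eq]
    simp [List.filter_append]
  have hflen : (w.filter (fun x => decide (x ≤ c))).length = c := by
    rw [(hw.filter _).length_eq, filter_range'_le c _ (by omega), List.length_range']
  have hc : c = a + 1 := by
    rw [hwfilter] at hflen
    simp [hfu_len] at hflen
    omega
  rw [hc] at h1 h2 hwfilter hw_eq
  -- nodup facts
  have hnd : w.Nodup := hw.nodup_iff.mpr (List.nodup_range' ..)
  rw [← hw_eq] at hnd
  have hdisj := List.disjoint_of_nodup_append hnd
  have hnotmem : (a + 1) ∉ w' := fun hmem => hdisj hmem (by simp)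
  -- switch predicates from ≤ a+1 to ≤ a on w'
  have hpred : ∀ x ∈ w', (fun x => decide (x ≤ a + 1)) x = (fun x => decide (x ≤ a)) x := by
    intro x hx
    have : x ≠ a + 1 := fun h => hnotmem (h ▸ hx)
    simp; omega
  have hpredneg : ∀ x ∈ w',
      (fun x => !decide (x ≤ a + 1)) x = (fun x => !decide (x ≤ a)) x := by
    intro x hx
    have : x ≠ a + 1 := fun h => hnotmem (h ▸ hx)
    simp; omega
  set u := w'.filter (fun x => decide (x ≤ a)) with hu_def
  set v₀ := w'.filter (fun x => !decide (x ≤ a)) with hv₀_def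
  have hu₂ : w'.filter (fun x => decide (x ≤ a + 1)) = u := List.filter_congr hpred
  have hv₂ : w'.filter (fun x => !decide (x ≤ a + 1)) = v₀ := List.filter_congr hpredneg
  rw [hu₂] at h1 hwfilter
  rw [hv₂] at h2
  -- u is a permutation of 1..a
  have hu : u.Perm (List.range' 1 a) := by
    have hwa : w.filter (fun x => decide (x ≤ a)) = u := by
      conv_lhs => rw [← hw_eq]
      rw [List.filter_append, hu_def]
      simp [Nat.not_succ_le_self]
    have := (hw.filter (fun x => decide (x ≤ a))).trans
      (by rw [filter_range'_le a _ (by omega)])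
    rwa [hwa] at this
  -- v₀ is a permutation of a+2..a+1+b
  have hv₀ : v₀.Perm (List.range' (a + 2) b) := by
    have hwv : w.filter (fun x => !decide (x ≤ a + 1)) = v₀ := by
      conv_lhs => rw [← hw_eq]
      rw [List.filter_append, hv₂]
      simp
    have := (hw.filter (fun x => !decide (x ≤ a + 1))).trans
      (by rw [filter_range'_gt (a + 1) _ (by omega)])
    rw [hwv] at this
    simpa [show a + b + 1 - (a + 1) = b by omega] using this
  set v := v₀.map (fun x => x - (a + 1)) with hv_def
  have hshiftv : shift (a + 1) v = v₀ := by
    rw [hv_def, shift, List.map_map]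
    have : ∀ x ∈ v₀, ((fun x => x + (a + 1)) ∘ fun x => x - (a + 1)) x = x := by
      intro x hx
      have := hv₀.subset hx
      rw [List.mem_range'_1] at this
      simp; omega
    rw [List.map_congr_left this]
    simp
  have hv : v.Perm (List.range' 1 b) := by
    have hmap := hv₀.map (fun x => x - (a + 1))
    have hr : (List.range' (a + 2) b).map (fun x => x - (a + 1)) = List.range' 1 b := by
      have : List.range' (a + 2) b = (List.range' 1 b).map (fun x => (a + 1) + x) := by
        rw [List.map_add_range']
      rw [this, List.map_map]
      have : ∀ x ∈ List.range' 1 b, ((fun x => x - (a + 1)) ∘ fun x => (a + 1) + x) x = x := by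
        intro x _; simp
      rw [List.map_congr_left this]
      simp
    rwa [hr] at hmap
  have hvr : shape (P v) = r := by
    rw [← hshiftv] at h2
    rwa [shape_P_shift] at h2
  -- the position set
  set s := (Finset.range (a + b)).filter
    (fun i => (fun x => decide (x ≤ a)) (w'.getD i 0)) with hs_def
  have hs : s ⊆ Finset.range (a + b) := Finset.filter_subset _ _
  have hsc : s.card = a := by
    rw [hs_def, ← countP_range, ← hlen', countP_range_getD w' (fun x => decide (x ≤ a)),
      List.countP_eq_length_filter, ← hu_def, hu.length_eq, List.length_range']
  have hmask : maskOf s (a + b) = w'.map (fun x => decide (x ≤ a)) := by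
    rw [hs_def]
    exact maskOf_eq_map w' (a + b) hlen' (fun x => decide (x ≤ a))
  refine ⟨s, u, v, hs, hsc, hu, hv, h1, hvr, ?_⟩
  rw [hmask, hshiftv, hu_def, hv₀_def, merge_recover, hw_eq]

lemma hookProd_pos (T : BinaryTree Unit) : 0 < hookProd T := by
  induction T with
  | nil => exact Nat.one_pos
  | node x l r ihl ihr =>
    exact Nat.mul_pos (Nat.mul_pos (by omega) ihl) ihr

open Classical in
lemma card_node (l r : BinaryTree Unit) :
    (((List.range' 1 (l.numNodes + r.numNodes + 1)).permutations.toFinset).filter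
        (fun w => shape (P w) = BinaryTree.node () l r)).card
      = (l.numNodes + r.numNodes).choose l.numNodes *
        ((((List.range' 1 l.numNodes).permutations.toFinset).filter
            (fun w => shape (P w) = l)).card *
         (((List.range' 1 r.numNodes).permutations.toFinset).filter
            (fun w => shape (P w) = r)).card) := by
  set a := l.numNodes with ha
  set b := r.numNodes with hb
  have hBcard : ((Finset.powersetCard a (Finset.range (a + b))) ×ˢ
      ((((List.range' 1 a).permutations.toFinset).filter (fun w => shape (P w) = l)) ×ˢ
       (((List.range' 1 b).permutations.toFinset).filter (fun w => shape (P w) = r)))).card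
      = (a + b).choose a *
        ((((List.range' 1 a).permutations.toFinset).filter (fun w => shape (P w) = l)).card *
         (((List.range' 1 b).permutations.toFinset).filter (fun w => shape (P w) = r)).card) := by
    rw [Finset.card_product, Finset.card_product, Finset.card_powersetCard, Finset.card_range]
  rw [← hBcard]
  refine (Finset.card_bij (fun (x : Finset ℕ × List ℕ × List ℕ) _ =>
    merge (maskOf x.1 (a + b)) x.2.1 (shift (a + 1) x.2.2) ++ [a + 1]) ?_ ?_ ?_).symm
  · rintro ⟨s, u, v⟩ hmem
    simp only [Finset.mem_product, Finset.mem_powersetCard, Finset.mem_filter,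
      List.mem_toFinset, List.mem_permutations] at hmem
    obtain ⟨⟨hs, hsc⟩, ⟨hu, hul⟩, ⟨hv, hvr⟩⟩ := hmem
    simp only [Finset.mem_filter, List.mem_toFinset, List.mem_permutations]
    exact ⟨forward_perm hs hsc hu hv, forward_shape hs hsc hu hv l r hul hvr⟩
  · rintro ⟨s, u, v⟩ hmem ⟨s', u', v'⟩ hmem' heq
    simp only [Finset.mem_product, Finset.mem_powersetCard, Finset.mem_filter,
      List.mem_toFinset, List.mem_permutations] at hmem hmem'
    obtain ⟨⟨hs, hsc⟩, ⟨hu, _⟩, ⟨hv, _⟩⟩ := hmem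
    obtain ⟨⟨hs', hsc'⟩, ⟨hu', _⟩, ⟨hv', _⟩⟩ := hmem'
    obtain ⟨e1, e2, e3⟩ := merge_inj hs hsc hs' hsc' hu hv hu' hv' heq
    simp [e1, e2, e3]
  · intro w hw
    simp only [Finset.mem_filter, List.mem_toFinset, List.mem_permutations] at hw
    obtain ⟨hwp, hwsh⟩ := hw
    obtain ⟨s, u, v, hs, hsc, hu, hv, hul, hvr, heq⟩ := backward hwp ha.symm hb.symm hwsh
    refine ⟨⟨s, u, v⟩, ?_, heq⟩
    simp only [Finset.mem_product, Finset.mem_powersetCard, Finset.mem_filter,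
      List.mem_toFinset, List.mem_permutations]
    exact ⟨⟨hs, hsc⟩, ⟨hu, hul⟩, ⟨hv, hvr⟩⟩

open Classical in
lemma key (T : BinaryTree Unit) :
    (((List.range' 1 T.numNodes).permutations.toFinset).filter
        (fun w => shape (P w) = T)).card * hookProd T = (T.numNodes).factorial := by
  induction T with
  | nil =>
    simp [BinaryTree.numNodes, hookProd, P, shape, Nat.factorial]
    rw [Finset.filter_singleton,
      if_pos (show shape (List.foldr insert BinaryTree.nil []) = BinaryTree.nil from rfl)]
    simp
  | node x l r ihl ihr =>
    cases x
    set a := l.numNodes with ha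
    set b := r.numNodes with hb
    have hnum : (BinaryTree.node () l r).numNodes = a + b + 1 := by
      simp [BinaryTree.numNodes, ha, hb]
    rw [hnum, card_node l r]
    have hook : hookProd (BinaryTree.node () l r) = (a + b + 1) * hookProd l * hookProd r := rfl
    rw [hook]
    have hcf : (a + b).choose a * (a.factorial * b.factorial) = (a + b).factorial := by
      have h := Nat.add_choose_mul_factorial_mul_factorial b a
      rw [Nat.add_comm b a] at h
      rw [← h]; ring
    have hfact : (a + b + 1).factorial = (a + b + 1) * ((a + b).choose a *
        (a.factorial * b.factorial)) := by
      rw [hcf, Nat.factorial_succ]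
    rw [hfact, ← ihl, ← ihr]
    ring

end Sylv

open Classical in
/-- hook length formula for binary trees. -/
theorem stmt12 (n : ℕ) (T : BinaryTree Unit) (hn : T.numNodes = n) :
    (((List.range' 1 n).permutations.toFinset).filter
        (fun w => Sylv.shape (Sylv.P w) = T)).card = n.factorial / Sylv.hookProd T := by
  subst hn
  rw [← Sylv.key T, Nat.mul_div_cancel _ (Sylv.hookProd_pos T)]
end
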